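/- arXiv:1901.06218 — 2 statements merged into one kernel-verified Lean document; each statement's English description precedes it below -/
import Mathlib

section
/- Let β, β1, β2 ∈ (0,1) with β1 ≤ β and β2 ≤ β. Then the bound gap satisfies Δ(β,β1,β2) ≤ (β − β1) + (β − β2). -/
/-- F_l(μ,β) = −(μ·ln((1−μ)·β + μ) + (1−μ)·ln(μ·β + (1−μ))). -/
noncomputable def Fl (μ β : ℝ) : ℝ :=
  -(μ * Real.log ((1 - μ) * β + μ) + (1 - μ) * Real.log (μ * β + (1 - μ)))

/-- F_u(μ,β1,β2) = −(μ·ln((1−μ)·β1 + μ) + (1−μ)·ln(μ·β2 + (1−μ))). -/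
noncomputable def Fu (μ β1 β2 : ℝ) : ℝ :=
  -(μ * Real.log ((1 - μ) * β1 + μ) + (1 - μ) * Real.log (μ * β2 + (1 - μ)))

/-- The bound gap Δ(β,β1,β2) = sup_{μ∈[0,1]} (F_u(μ,β1,β2) − F_l(μ,β)). -/
noncomputable def boundGap (β β1 β2 : ℝ) : ℝ :=
  ⨆ μ : Set.Icc (0:ℝ) 1, (Fu μ β1 β2 - Fl μ β)

open Real

theorem mul_sub_log_le_sub {t x y : ℝ} (ht : 0 ≤ t) (hty : t ≤ y) (hyx : y ≤ x) :
    t * (log x - log y) ≤ x - y := by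
  rcases (ht.trans hty).eq_or_lt with hy | hy
  · have ht0 : t = 0 := le_antisymm (hy ▸ hty) ht
    simp only [ht0, zero_mul, sub_nonneg, hyx]
  have hx : 0 < x := hy.trans_le hyx
  have hlog_nonneg : 0 ≤ log x - log y := sub_nonneg.mpr (log_le_log hy hyx)
  have hlog : y * (log x - log y) ≤ x - y := by
    rw [← log_div hx.ne' hy.ne']
    have := log_le_sub_one_of_pos (div_pos hx hy)
    calc y * log (x / y) ≤ y * (x / y - 1) := mul_le_mul_of_nonneg_left this hy.le
      _ = x - y := by field_simp
  exact (mul_le_mul_of_nonneg_right hty hlog_nonneg).trans hlog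

theorem Fu_sub_Fl_le {μ β β1 β2 : ℝ} (hμ0 : 0 ≤ μ) (hμ1 : μ ≤ 1) (hβ1 : 0 ≤ β1) (hβ2 : 0 ≤ β2)
    (h1 : β1 ≤ β) (h2 : β2 ≤ β) :
    Fu μ β1 β2 - Fl μ β ≤ (1 - μ) * (β - β1) + μ * (β - β2) := by
  have hA : μ * (log ((1 - μ) * β + μ) - log ((1 - μ) * β1 + μ))
      ≤ ((1 - μ) * β + μ) - ((1 - μ) * β1 + μ) :=
    mul_sub_log_le_sub hμ0 (by nlinarith) (by nlinarith)
  have hB : (1 - μ) * (log (μ * β + (1 - μ)) - log (μ * β2 + (1 - μ)))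
      ≤ (μ * β + (1 - μ)) - (μ * β2 + (1 - μ)) :=
    mul_sub_log_le_sub (by linarith) (by nlinarith) (by nlinarith)
  simp only [Fu, Fl]
  linarith

theorem boundGap_le_highSNR_general (β β1 β2 : ℝ)
    (hβ1 : β1 ∈ Set.Ioo (0:ℝ) 1) (hβ2 : β2 ∈ Set.Ioo (0:ℝ) 1)
    (h1 : β1 ≤ β) (h2 : β2 ≤ β) :
    boundGap β β1 β2 ≤ (β - β1) + (β - β2) := by
  have : Nonempty (Set.Icc (0:ℝ) 1) := (Set.nonempty_Icc.mpr zero_le_one).to_subtype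
  refine ciSup_le ?_
  rintro ⟨μ, hμ0, hμ1⟩
  calc Fu μ β1 β2 - Fl μ β ≤ (1 - μ) * (β - β1) + μ * (β - β2) :=
        Fu_sub_Fl_le hμ0 hμ1 hβ1.1.le hβ2.1.le h1 h2
    _ ≤ (β - β1) + (β - β2) := by nlinarith

/-- high-SNR bound: for β, β1, β2 ∈ (0,1) with β1 ≤ β and β2 ≤ β,
Δ(β,β1,β2) ≤ (β − β1) + (β − β2). -/
theorem boundGap_le_highSNR (β β1 β2 : ℝ)
    (hβ : β ∈ Set.Ioo (0:ℝ) 1) (hβ1 : β1 ∈ Set.Ioo (0:ℝ) 1) (hβ2 : β2 ∈ Set.Ioo (0:ℝ) 1)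
    (h1 : β1 ≤ β) (h2 : β2 ≤ β) :
    boundGap β β1 β2 ≤ (β - β1) + (β - β2) :=
  boundGap_le_highSNR_general β β1 β2 hβ1 hβ2 h1 h2
end

section
/- Fix dead time τ > 0, background intensity Λ0 > 0, and integer L ≥ 1. Set p0 = 1 − exp(−Λ0·τ) and, for peak power A > 0, p1(A) = 1 − exp(−(A+Λ0)·τ). With β(A) = (√(p0·p1(A)) + √((1−p0)·(1−p1(A))))^L, β1(A) = ((p0/p1(A))^{p1(A)}·((1−p0)/(1−p1(A)))^{1−p1(A)})^L, β2(A) = ((p1(A)/p0)^{p0}·((1−p1(A))/(1−p0))^{1−p0})^L, and Δ(A) = Δ(β(A),β1(A),β2(A)), one has Δ(A) = (3·L·(1−p0)/(16·p0))·τ²·A² + o(A²) as A → 0⁺; that is, (Δ(A) − (3·L·(1−p0)/(16·p0))·τ²·A²)/A² → 0 as A → 0⁺. -/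
open Real Filter Set

lemma second_lim {f f' f'' : ℝ → ℝ} {b l : ℝ} (hb : 0 < b)
    (hff' : ∀ x ∈ Ioo (0:ℝ) b, HasDerivAt f (f' x) x)
    (hf'f'' : ∀ x ∈ Ioo (0:ℝ) b, HasDerivAt f' (f'' x) x)
    (hf0 : Tendsto f (nhdsWithin 0 (Ioi 0)) (nhds 0))
    (hf'0 : Tendsto f' (nhdsWithin 0 (Ioi 0)) (nhds 0))
    (hf''l : Tendsto f'' (nhdsWithin 0 (Ioi 0)) (nhds l)) :
    Tendsto (fun x => f x / x ^ 2) (nhdsWithin 0 (Ioi 0)) (nhds (l / 2)) := by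
  have h1 : Tendsto (fun x => f' x / (2 * x)) (nhdsWithin 0 (Ioi 0)) (nhds (l / 2)) := by
    apply HasDerivAt.lhopital_zero_right_on_Ioo hb hf'f''
      (g := fun x => 2 * x) (g' := fun _ => 2)
      (fun x _ => by simpa using (hasDerivAt_id x).const_mul 2)
      (fun x _ => two_ne_zero) hf'0
      (by
        have : Tendsto (fun x : ℝ => 2 * x) (nhdsWithin 0 (Ioi 0)) (nhds (2 * 0)) :=
          (continuous_const.mul continuous_id).continuousAt.tendsto.mono_left nhdsWithin_le_nhds
        simpa using this)
      (by simpa using hf''l.div_const 2)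
  apply HasDerivAt.lhopital_zero_right_on_Ioo hb hff'
    (g := fun x => x ^ 2) (g' := fun x => 2 * x)
    (fun x _ => by simpa [mul_comm] using (hasDerivAt_pow 2 x))
    (fun x hx => (mul_pos two_pos hx.1).ne') hf0
    (by
      have : Tendsto (fun x : ℝ => x ^ 2) (nhdsWithin 0 (Ioi 0)) (nhds ((0:ℝ) ^ 2)) :=
        (continuous_pow 2).continuousAt.tendsto.mono_left nhdsWithin_le_nhds
      simpa using this)
    h1

lemma limRho (p q : ℝ) (L : ℕ) (hp : 0 < p) (hq : 0 < q) (hpq : p + q = 1) :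
    Tendsto (fun t => (1 - (Real.sqrt (p * (p + t)) + Real.sqrt (q * (q - t))) ^ L) / t ^ 2)
      (nhdsWithin 0 (Ioi 0)) (nhds ((L * (1 / (4 * p) + 1 / (4 * q))) / 2)) := by
  set b := min p q / 2 with hbdef
  have hb : 0 < b := by positivity
  have hbp : b ≤ p / 2 := div_le_div_of_nonneg_right (min_le_left p q) two_pos.le
  have hbq : b ≤ q / 2 := div_le_div_of_nonneg_right (min_le_right p q) two_pos.le
  set s : ℝ → ℝ := fun t => Real.sqrt (p * (p + t)) + Real.sqrt (q * (q - t)) with hs_def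
  set s' : ℝ → ℝ := fun t => p / (2 * Real.sqrt (p * (p + t))) + -q / (2 * Real.sqrt (q * (q - t))) with hs'_def
  set s'' : ℝ → ℝ := fun t =>
      -(p * p / (4 * (p * (p + t)) * Real.sqrt (p * (p + t))))
      + -(q * q / (4 * (q * (q - t)) * Real.sqrt (q * (q - t)))) with hs''_def
  have hdom : ∀ t ∈ Ioo (-b) b, 0 < p + t ∧ 0 < q - t := by
    intro t ht
    exact ⟨by nlinarith [ht.1], by nlinarith [ht.2]⟩
  have hs : ∀ t ∈ Ioo (-b) b, HasDerivAt s (s' t) t := by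
    intro t ht
    obtain ⟨h1, h2⟩ := hdom t ht
    have hx : HasDerivAt (fun t : ℝ => p * (p + t)) p t := by
      simpa using ((hasDerivAt_id t).const_add p).const_mul p
    have hy : HasDerivAt (fun t : ℝ => q * (q - t)) (-q) t := by
      simpa using ((hasDerivAt_id t).const_sub q).const_mul q
    exact (hx.sqrt (by positivity)).add (hy.sqrt (by positivity))
  have hs' : ∀ t ∈ Ioo (-b) b, HasDerivAt s' (s'' t) t := by
    intro t ht
    obtain ⟨h1, h2⟩ := hdom t ht
    have hx : HasDerivAt (fun t : ℝ => p * (p + t)) p t := by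
      simpa using ((hasDerivAt_id t).const_add p).const_mul p
    have hy : HasDerivAt (fun t : ℝ => q * (q - t)) (-q) t := by
      simpa using ((hasDerivAt_id t).const_sub q).const_mul q
    have hu1 : HasDerivAt (fun t => p / (2 * Real.sqrt (p * (p + t))))
        (-(p * p / (4 * (p * (p + t)) * Real.sqrt (p * (p + t))))) t := by
      have h := (hasDerivAt_const t p).div ((hx.sqrt (by positivity)).const_mul 2)
        (by positivity)
      convert h using 1
      · rfl
      · rfl
      · rfl
      set S := Real.sqrt (p * (p + t)) with hS
      have hsq : S ^ 2 = p * (p + t) := Real.sq_sqrt (by positivity)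
      have hs0 : S ≠ 0 := by positivity
      rw [← hsq]
      field_simp
      ring
    have hu2 : HasDerivAt (fun t => -q / (2 * Real.sqrt (q * (q - t))))
        (-(q * q / (4 * (q * (q - t)) * Real.sqrt (q * (q - t))))) t := by
      have h := (hasDerivAt_const t (-q)).div ((hy.sqrt (by positivity)).const_mul 2)
        (by positivity)
      convert h using 1
      · rfl
      · rfl
      · rfl
      set S := Real.sqrt (q * (q - t)) with hS
      have hsq : S ^ 2 = q * (q - t) := Real.sq_sqrt (by positivity)
      have hs0 : S ≠ 0 := by positivity
      rw [← hsq]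
      field_simp
      ring
    exact hu1.add hu2
  set f : ℝ → ℝ := fun t => 1 - s t ^ L with hf_def
  set f' : ℝ → ℝ := fun t => -(L * s t ^ (L - 1) * s' t) with hf'_def
  set f'' : ℝ → ℝ := fun t =>
      -(↑L * ((↑(L - 1) * s t ^ (L - 1 - 1) * s' t) * s' t + s t ^ (L - 1) * s'' t)) with hf''_def
  have hff' : ∀ t ∈ Ioo (-b) b, HasDerivAt f (f' t) t := by
    intro t ht
    simpa using ((hs t ht).pow L).const_sub 1
  have hf'f'' : ∀ t ∈ Ioo (-b) b, HasDerivAt f' (f'' t) t := by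
    intro t ht
    have h := (((hs t ht).pow (L - 1)).mul (hs' t ht)).const_mul (-(L:ℝ))
    convert h using 1
    · rfl
    · rfl
    · funext u
      simp only [hf'_def, Pi.mul_apply, Pi.pow_apply]
      ring
    · simp only [hf''_def, Pi.pow_apply]
      ring
  have h0mem : (0:ℝ) ∈ Ioo (-b) b := ⟨by linarith, hb⟩
  have hsqp : Real.sqrt (p * (p + 0)) = p := by
    rw [add_zero]; exact Real.sqrt_mul_self hp.le
  have hsqq : Real.sqrt (q * (q - 0)) = q := by
    rw [sub_zero]; exact Real.sqrt_mul_self hq.le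
  have hs0 : s 0 = 1 := by simp only [hs_def, hsqp, hsqq]; exact hpq
  have hs'0 : s' 0 = 0 := by
    simp only [hs'_def, hsqp, hsqq]
    field_simp
    ring
  have hs''0 : s'' 0 = -(1 / (4 * p) + 1 / (4 * q)) := by
    simp only [hs''_def, hsqp, hsqq, add_zero, sub_zero, Real.sqrt_mul_self hp.le, Real.sqrt_mul_self hq.le]
    field_simp
    ring
  have hf0v : f 0 = 0 := by simp [hf_def, hs0]
  have hf'0v : f' 0 = 0 := by simp [hf'_def, hs'0]
  have hf''0v : f'' 0 = L * (1 / (4 * p) + 1 / (4 * q)) := by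
    simp only [hf''_def, hs0, hs'0, hs''0]
    ring
  have hcf : ContinuousAt f 0 := (hff' 0 h0mem).continuousAt
  have hcf' : ContinuousAt f' 0 := (hf'f'' 0 h0mem).continuousAt
  have hcs : ContinuousAt s 0 := (hs 0 h0mem).continuousAt
  have hcs' : ContinuousAt s' 0 := (hs' 0 h0mem).continuousAt
  have c1 : Continuous fun t : ℝ => p * (p + t) :=
    continuous_const.mul (continuous_const.add continuous_id)
  have c2 : Continuous fun t : ℝ => q * (q - t) :=
    continuous_const.mul (continuous_const.sub continuous_id)
  have hcs'' : ContinuousAt s'' 0 := by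
    simp only [hs''_def]
    have d1 : ContinuousAt (fun t : ℝ => 4 * (p * (p + t)) * Real.sqrt (p * (p + t))) 0 :=
      ((continuous_const.mul c1).mul (Real.continuous_sqrt.comp c1)).continuousAt
    have d2 : ContinuousAt (fun t : ℝ => 4 * (q * (q - t)) * Real.sqrt (q * (q - t))) 0 :=
      ((continuous_const.mul c2).mul (Real.continuous_sqrt.comp c2)).continuousAt
    have hd1 : (4 * (p * (p + (0:ℝ))) * Real.sqrt (p * (p + 0))) ≠ 0 := by
      rw [hsqp]; norm_num; positivity
    have hd2 : (4 * (q * (q - (0:ℝ))) * Real.sqrt (q * (q - 0))) ≠ 0 := by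
      rw [hsqq]; norm_num; positivity
    exact ((continuousAt_const.div d1 hd1).neg).add ((continuousAt_const.div d2 hd2).neg)
  have hcf'' : ContinuousAt f'' 0 := by
    simp only [hf''_def]
    exact (((((continuousAt_const.mul (hcs.pow _)).mul hcs').mul hcs').add
      ((hcs.pow _).mul hcs'')).const_mul _).neg
  have t0 : Tendsto f (nhdsWithin (0:ℝ) (Ioi 0)) (nhds (f 0)) :=
    hcf.tendsto.mono_left nhdsWithin_le_nhds
  have t1 : Tendsto f' (nhdsWithin (0:ℝ) (Ioi 0)) (nhds (f' 0)) :=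
    hcf'.tendsto.mono_left nhdsWithin_le_nhds
  have t2 : Tendsto f'' (nhdsWithin (0:ℝ) (Ioi 0)) (nhds (f'' 0)) :=
    hcf''.tendsto.mono_left nhdsWithin_le_nhds
  rw [hf0v] at t0
  rw [hf'0v] at t1
  rw [hf''0v] at t2
  exact second_lim hb
    (fun x hx => hff' x ⟨by linarith [hx.1], hx.2⟩)
    (fun x hx => hf'f'' x ⟨by linarith [hx.1], hx.2⟩) t0 t1 t2

lemma log_helper1 (p t : ℝ) (hp : 0 < p) (h1 : 0 < p + t) :
    HasDerivAt (fun t => Real.log ((p + t) / p)) (1 / (p + t)) t := by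
  have h : HasDerivAt (fun t : ℝ => (p + t) / p) (1 / p) t :=
    ((hasDerivAt_id t).const_add p).div_const p
  have := h.log (by positivity)
  convert this using 1
  field_simp

lemma log_helper2 (q t : ℝ) (hq : 0 < q) (h2 : 0 < q - t) :
    HasDerivAt (fun t => Real.log ((q - t) / q)) (-(1 / (q - t))) t := by
  have h : HasDerivAt (fun t : ℝ => (q - t) / q) (-1 / q) t :=
    ((hasDerivAt_id t).const_sub q).div_const q
  have := h.log (by positivity)
  convert this using 1
  field_simp

lemma limKL1 (p q : ℝ) (L : ℕ) (hp : 0 < p) (hq : 0 < q) :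
    Tendsto (fun t => (1 - Real.exp (-(L *
        ((p + t) * Real.log ((p + t) / p) + (q - t) * Real.log ((q - t) / q))))) / t ^ 2)
      (nhdsWithin 0 (Ioi 0)) (nhds ((L * (1 / p + 1 / q)) / 2)) := by
  set b := min p q / 2 with hbdef
  have hb : 0 < b := by positivity
  have hbp : b ≤ p / 2 := div_le_div_of_nonneg_right (min_le_left p q) two_pos.le
  have hbq : b ≤ q / 2 := div_le_div_of_nonneg_right (min_le_right p q) two_pos.le
  set φ : ℝ → ℝ := fun t => (p + t) * Real.log ((p + t) / p) + (q - t) * Real.log ((q - t) / q)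
    with hφ_def
  set φ' : ℝ → ℝ := fun t => Real.log ((p + t) / p) - Real.log ((q - t) / q) with hφ'_def
  set φ'' : ℝ → ℝ := fun t => 1 / (p + t) + 1 / (q - t) with hφ''_def
  have hdom : ∀ t ∈ Ioo (-b) b, 0 < p + t ∧ 0 < q - t := by
    intro t ht
    exact ⟨by nlinarith [ht.1], by nlinarith [ht.2]⟩
  have hφd : ∀ t ∈ Ioo (-b) b, HasDerivAt φ (φ' t) t := by
    intro t ht
    obtain ⟨h1, h2⟩ := hdom t ht
    have ha := ((hasDerivAt_id t).const_add p).mul (log_helper1 p t hp h1)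
    have hb' := ((hasDerivAt_id t).const_sub q).mul (log_helper2 q t hq h2)
    have := ha.add hb'
    convert this using 1
    · rfl
    · rfl
    · rfl
    simp only [hφ'_def, id]
    rw [mul_one_div_cancel h1.ne', mul_neg, mul_one_div_cancel h2.ne']
    ring
  have hφ'd : ∀ t ∈ Ioo (-b) b, HasDerivAt φ' (φ'' t) t := by
    intro t ht
    obtain ⟨h1, h2⟩ := hdom t ht
    have := (log_helper1 p t hp h1).sub (log_helper2 q t hq h2)
    convert this using 1
    · rfl
    · rfl
    · rfl
    simp only [hφ''_def]
    ring
  set f : ℝ → ℝ := fun t => 1 - Real.exp (-(L * φ t)) with hf_def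
  set f' : ℝ → ℝ := fun t => L * φ' t * Real.exp (-(L * φ t)) with hf'_def
  set f'' : ℝ → ℝ := fun t => (L * φ'' t - (L * φ' t) ^ 2) * Real.exp (-(L * φ t)) with hf''_def
  have hexp : ∀ t ∈ Ioo (-b) b, HasDerivAt (fun t => Real.exp (-(L * φ t)))
      (Real.exp (-(L * φ t)) * -(L * φ' t)) t := by
    intro t ht
    exact (((hφd t ht).const_mul (L:ℝ)).neg).exp
  have hff' : ∀ t ∈ Ioo (-b) b, HasDerivAt f (f' t) t := by
    intro t ht
    have := (hexp t ht).const_sub 1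
    convert this using 1
    · rfl
    · rfl
    simp only [hf'_def]
    ring
  have hf'f'' : ∀ t ∈ Ioo (-b) b, HasDerivAt f' (f'' t) t := by
    intro t ht
    have := (((hφ'd t ht).const_mul (L:ℝ)).mul (hexp t ht))
    convert this using 1
    · rfl
    · rfl
    · rfl
    simp only [hf''_def]
    ring
  have h0mem : (0:ℝ) ∈ Ioo (-b) b := ⟨by linarith, hb⟩
  have hlogp : Real.log ((p + (0:ℝ)) / p) = 0 := by
    rw [add_zero, div_self hp.ne', Real.log_one]
  have hlogq : Real.log ((q - (0:ℝ)) / q) = 0 := by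
    rw [sub_zero, div_self hq.ne', Real.log_one]
  have hφ0 : φ 0 = 0 := by simp [hφ_def, div_self hp.ne', div_self hq.ne']
  have hφ'0 : φ' 0 = 0 := by simp [hφ'_def, div_self hp.ne', div_self hq.ne']
  have hφ''0 : φ'' 0 = 1 / p + 1 / q := by simp [hφ''_def]
  have hf0v : f 0 = 0 := by simp [hf_def, hφ0]
  have hf'0v : f' 0 = 0 := by simp [hf'_def, hφ'0]
  have hf''0v : f'' 0 = L * (1 / p + 1 / q) := by
    simp [hf''_def, hφ0, hφ'0, hφ''0]
  have hcf : ContinuousAt f 0 := (hff' 0 h0mem).continuousAt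
  have hcf' : ContinuousAt f' 0 := (hf'f'' 0 h0mem).continuousAt
  have hcφ : ContinuousAt φ 0 := (hφd 0 h0mem).continuousAt
  have hcφ' : ContinuousAt φ' 0 := (hφ'd 0 h0mem).continuousAt
  have hcφ'' : ContinuousAt φ'' 0 := by
    simp only [hφ''_def]
    have d1 : ContinuousAt (fun t : ℝ => p + t) 0 :=
      (continuous_const.add continuous_id).continuousAt
    have d2 : ContinuousAt (fun t : ℝ => q - t) 0 :=
      (continuous_const.sub continuous_id).continuousAt
    exact (continuousAt_const.div d1 (by simpa using hp.ne')).add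
      (continuousAt_const.div d2 (by simpa using hq.ne'))
  have hcf'' : ContinuousAt f'' 0 := by
    simp only [hf''_def]
    exact (((hcφ''.const_mul _)).sub ((hcφ'.const_mul _).pow 2)).mul
      (Real.continuous_exp.continuousAt.comp ((hcφ.const_mul ((L:ℕ):ℝ)).neg))
  have t0 : Tendsto f (nhdsWithin (0:ℝ) (Ioi 0)) (nhds (f 0)) :=
    hcf.tendsto.mono_left nhdsWithin_le_nhds
  have t1 : Tendsto f' (nhdsWithin (0:ℝ) (Ioi 0)) (nhds (f' 0)) :=
    hcf'.tendsto.mono_left nhdsWithin_le_nhds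
  have t2 : Tendsto f'' (nhdsWithin (0:ℝ) (Ioi 0)) (nhds (f'' 0)) :=
    hcf''.tendsto.mono_left nhdsWithin_le_nhds
  rw [hf0v] at t0
  rw [hf'0v] at t1
  rw [hf''0v] at t2
  exact second_lim hb
    (fun x hx => hff' x ⟨by linarith [hx.1], hx.2⟩)
    (fun x hx => hf'f'' x ⟨by linarith [hx.1], hx.2⟩) t0 t1 t2

lemma limKL2 (p q : ℝ) (L : ℕ) (hp : 0 < p) (hq : 0 < q) :
    Tendsto (fun t => (1 - Real.exp (L *
        (p * Real.log ((p + t) / p) + q * Real.log ((q - t) / q)))) / t ^ 2)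
      (nhdsWithin 0 (Ioi 0)) (nhds ((L * (1 / p + 1 / q)) / 2)) := by
  set b := min p q / 2 with hbdef
  have hb : 0 < b := by positivity
  have hbp : b ≤ p / 2 := div_le_div_of_nonneg_right (min_le_left p q) two_pos.le
  have hbq : b ≤ q / 2 := div_le_div_of_nonneg_right (min_le_right p q) two_pos.le
  set ψ : ℝ → ℝ := fun t => p * Real.log ((p + t) / p) + q * Real.log ((q - t) / q) with hψ_def
  set ψ' : ℝ → ℝ := fun t => p / (p + t) - q / (q - t) with hψ'_def
  set ψ'' : ℝ → ℝ := fun t => -(p / (p + t) ^ 2) - q / (q - t) ^ 2 with hψ''_def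
  have hdom : ∀ t ∈ Ioo (-b) b, 0 < p + t ∧ 0 < q - t := by
    intro t ht
    exact ⟨by nlinarith [ht.1], by nlinarith [ht.2]⟩
  have hψd : ∀ t ∈ Ioo (-b) b, HasDerivAt ψ (ψ' t) t := by
    intro t ht
    obtain ⟨h1, h2⟩ := hdom t ht
    have := ((log_helper1 p t hp h1).const_mul p).add ((log_helper2 q t hq h2).const_mul q)
    convert this using 1
    · rfl
    · rfl
    · rfl
    simp only [hψ'_def]
    field_simp
    ring
  have hψ'd : ∀ t ∈ Ioo (-b) b, HasDerivAt ψ' (ψ'' t) t := by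
    intro t ht
    obtain ⟨h1, h2⟩ := hdom t ht
    have ha := (hasDerivAt_const t p).div ((hasDerivAt_id t).const_add p) h1.ne'
    have hb' := (hasDerivAt_const t q).div ((hasDerivAt_id t).const_sub q) h2.ne'
    have := ha.sub hb'
    convert this using 1
    · rfl
    · rfl
    · rfl
    simp only [hψ''_def, id]
    field_simp
    ring
  set f : ℝ → ℝ := fun t => 1 - Real.exp (L * ψ t) with hf_def
  set f' : ℝ → ℝ := fun t => -(L * ψ' t * Real.exp (L * ψ t)) with hf'_def
  set f'' : ℝ → ℝ := fun t => -((L * ψ'' t + (L * ψ' t) ^ 2) * Real.exp (L * ψ t)) with hf''_def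
  have hexp : ∀ t ∈ Ioo (-b) b, HasDerivAt (fun t => Real.exp (L * ψ t))
      (Real.exp (L * ψ t) * (L * ψ' t)) t := by
    intro t ht
    exact ((hψd t ht).const_mul (L:ℝ)).exp
  have hff' : ∀ t ∈ Ioo (-b) b, HasDerivAt f (f' t) t := by
    intro t ht
    have := (hexp t ht).const_sub 1
    convert this using 1
    · rfl
    · rfl
    simp only [hf'_def]
    ring
  have hf'f'' : ∀ t ∈ Ioo (-b) b, HasDerivAt f' (f'' t) t := by
    intro t ht
    have := (((hψ'd t ht).const_mul (L:ℝ)).mul (hexp t ht)).neg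
    convert this using 1
    · rfl
    · rfl
    · rfl
    simp only [hf''_def]
    ring
  have h0mem : (0:ℝ) ∈ Ioo (-b) b := ⟨by linarith, hb⟩
  have hψ0 : ψ 0 = 0 := by simp [hψ_def, div_self hp.ne', div_self hq.ne']
  have hψ'0 : ψ' 0 = 0 := by simp [hψ'_def, div_self hp.ne', div_self hq.ne']
  have hψ''0 : ψ'' 0 = -(1 / p) - 1 / q := by
    simp only [hψ''_def, add_zero, sub_zero]
    rw [sq, sq]
    field_simp
  have hf0v : f 0 = 0 := by simp [hf_def, hψ0]
  have hf'0v : f' 0 = 0 := by simp [hf'_def, hψ'0]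
  have hf''0v : f'' 0 = L * (1 / p + 1 / q) := by
    simp only [hf''_def, hψ0, hψ'0, hψ''0]
    simp
    ring
  have hcf : ContinuousAt f 0 := (hff' 0 h0mem).continuousAt
  have hcf' : ContinuousAt f' 0 := (hf'f'' 0 h0mem).continuousAt
  have hcψ : ContinuousAt ψ 0 := (hψd 0 h0mem).continuousAt
  have hcψ' : ContinuousAt ψ' 0 := (hψ'd 0 h0mem).continuousAt
  have hcψ'' : ContinuousAt ψ'' 0 := by
    simp only [hψ''_def]
    have d1 : ContinuousAt (fun t : ℝ => (p + t) ^ 2) 0 :=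
      ((continuous_const.add continuous_id).pow 2).continuousAt
    have d2 : ContinuousAt (fun t : ℝ => (q - t) ^ 2) 0 :=
      ((continuous_const.sub continuous_id).pow 2).continuousAt
    exact ((continuousAt_const.div d1 (by simpa using pow_ne_zero 2 hp.ne')).neg).sub
      (continuousAt_const.div d2 (by simpa using pow_ne_zero 2 hq.ne'))
  have hcf'' : ContinuousAt f'' 0 := by
    simp only [hf''_def]
    exact (((hcψ''.const_mul _).add ((hcψ'.const_mul _).pow 2)).mul
      (Real.continuous_exp.continuousAt.comp (hcψ.const_mul ((L:ℕ):ℝ)))).neg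
  have t0 : Tendsto f (nhdsWithin (0:ℝ) (Ioi 0)) (nhds (f 0)) :=
    hcf.tendsto.mono_left nhdsWithin_le_nhds
  have t1 : Tendsto f' (nhdsWithin (0:ℝ) (Ioi 0)) (nhds (f' 0)) :=
    hcf'.tendsto.mono_left nhdsWithin_le_nhds
  have t2 : Tendsto f'' (nhdsWithin (0:ℝ) (Ioi 0)) (nhds (f'' 0)) :=
    hcf''.tendsto.mono_left nhdsWithin_le_nhds
  rw [hf0v] at t0
  rw [hf'0v] at t1
  rw [hf''0v] at t2
  exact second_lim hb
    (fun x hx => hff' x ⟨by linarith [hx.1], hx.2⟩)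
    (fun x hx => hf'f'' x ⟨by linarith [hx.1], hx.2⟩) t0 t1 t2

lemma comb_lb {β μ : ℝ} (hβ : 0 < β) (h0 : 0 ≤ μ) (h1 : μ ≤ 1) :
    0 < min β 1 ∧ min β 1 ≤ (1 - μ) * β + μ := by
  constructor
  · exact lt_min hβ one_pos
  · rcases min_cases β 1 with ⟨h, hb1⟩ | ⟨h, hb1⟩ <;> rw [h] <;> nlinarith

lemma term_le {β βi X Xi mi : ℝ} (hXi : 0 < Xi) (hX : 0 < X) (hmi : 0 < mi)
    (hmiXi : mi ≤ Xi) (hdiff : X - Xi = (1 - μ) * (β - βi)) (hμ0 : 0 ≤ μ) (hμ1 : μ ≤ 1) :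
    μ * (Real.log X - Real.log Xi) ≤ max (β - βi) 0 / mi / 4 := by
  have hlog : Real.log X - Real.log Xi ≤ (X - Xi) / Xi := by
    have h := Real.log_le_sub_one_of_pos (show 0 < X / Xi by positivity)
    rw [Real.log_div hX.ne' hXi.ne'] at h
    calc Real.log X - Real.log Xi ≤ X / Xi - 1 := h
      _ = (X - Xi) / Xi := by field_simp
  have key : (β - βi) / Xi ≤ max (β - βi) 0 / mi := by
    rcases le_or_gt 0 (β - βi) with hd | hd
    · calc (β - βi) / Xi ≤ (β - βi) / mi := div_le_div_of_nonneg_left hd hmi hmiXi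
        _ ≤ max (β - βi) 0 / mi := by
            apply div_le_div_of_nonneg_right (le_max_left _ _) hmi.le |>.trans_eq rfl
    · calc (β - βi) / Xi ≤ 0 := div_nonpos_iff.mpr (Or.inr ⟨hd.le, hXi.le⟩)
        _ ≤ max (β - βi) 0 / mi := by positivity
  have hμm : μ * (1 - μ) ≤ 1 / 4 := by nlinarith [sq_nonneg (μ - 1/2)]
  calc μ * (Real.log X - Real.log Xi) ≤ μ * ((X - Xi) / Xi) := by
        apply mul_le_mul_of_nonneg_left hlog hμ0
    _ = (μ * (1 - μ)) * ((β - βi) / Xi) := by rw [hdiff]; ring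
    _ ≤ (μ * (1 - μ)) * (max (β - βi) 0 / mi) := by
        apply mul_le_mul_of_nonneg_left key (by nlinarith)
    _ ≤ (1 / 4) * (max (β - βi) 0 / mi) := by
        apply mul_le_mul_of_nonneg_right hμm (by positivity)
    _ = max (β - βi) 0 / mi / 4 := by ring

lemma gap_le {β β1 β2 : ℝ} (hβ : 0 < β) (h1 : 0 < β1) (h2 : 0 < β2)
    {μ : ℝ} (hμ0 : 0 ≤ μ) (hμ1 : μ ≤ 1) :
    Fu μ β1 β2 - Fl μ β ≤
      (max (β - β1) 0 / min β1 1 + max (β - β2) 0 / min β2 1) / 4 := by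
  have hX : 0 < (1 - μ) * β + μ := lt_of_lt_of_le (comb_lb hβ hμ0 hμ1).1 (comb_lb hβ hμ0 hμ1).2
  have hX1 := comb_lb h1 hμ0 hμ1
  have hY : 0 < μ * β + (1 - μ) := by
    have := comb_lb hβ (by linarith : (0:ℝ) ≤ 1 - μ) (by linarith)
    have h' : (1 - (1 - μ)) * β + (1 - μ) = μ * β + (1 - μ) := by ring
    rw [h'] at this
    linarith [this.1, this.2]
  have hY2l := comb_lb h2 (by linarith : (0:ℝ) ≤ 1 - μ) (by linarith : 1 - μ ≤ 1)
  have hY2eq : (1 - (1 - μ)) * β2 + (1 - μ) = μ * β2 + (1 - μ) := by ring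
  rw [hY2eq] at hY2l
  have hterm1 : μ * (Real.log ((1 - μ) * β + μ) - Real.log ((1 - μ) * β1 + μ)) ≤
      max (β - β1) 0 / min β1 1 / 4 :=
    term_le (lt_of_lt_of_le hX1.1 hX1.2) hX hX1.1 hX1.2 (by ring) hμ0 hμ1
  have hterm2 : (1 - μ) * (Real.log (μ * β + (1 - μ)) - Real.log (μ * β2 + (1 - μ))) ≤
      max (β - β2) 0 / min β2 1 / 4 := by
    have := term_le (μ := 1 - μ) (lt_of_lt_of_le hY2l.1 hY2l.2) hY hY2l.1 hY2l.2
      (show μ * β + (1 - μ) - (μ * β2 + (1 - μ)) = (1 - (1 - μ)) * (β - β2) by ring)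
      (by linarith) (by linarith)
    exact this
  have : Fu μ β1 β2 - Fl μ β =
      μ * (Real.log ((1 - μ) * β + μ) - Real.log ((1 - μ) * β1 + μ)) +
      (1 - μ) * (Real.log (μ * β + (1 - μ)) - Real.log (μ * β2 + (1 - μ))) := by
    simp only [Fu, Fl]; ring
  rw [this]
  linarith [hterm1, hterm2]

lemma boundGap_bounds {β β1 β2 : ℝ} (hβ : 0 < β) (h1 : 0 < β1) (h2 : 0 < β2) :
    Fu (1/2) β1 β2 - Fl (1/2) β ≤ boundGap β β1 β2 ∧
    boundGap β β1 β2 ≤ (max (β - β1) 0 / min β1 1 + max (β - β2) 0 / min β2 1) / 4 := by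
  have hbd : ∀ i : Set.Icc (0:ℝ) 1, Fu i β1 β2 - Fl i β ≤
      (max (β - β1) 0 / min β1 1 + max (β - β2) 0 / min β2 1) / 4 :=
    fun i => gap_le hβ h1 h2 i.2.1 i.2.2
  have hbdd : BddAbove (Set.range fun i : Set.Icc (0:ℝ) 1 => Fu i β1 β2 - Fl i β) := by
    refine ⟨(max (β - β1) 0 / min β1 1 + max (β - β2) 0 / min β2 1) / 4, ?_⟩
    rintro x ⟨i, rfl⟩
    exact hbd i
  constructor
  · exact le_ciSup hbdd (⟨1/2, by norm_num, by norm_num⟩ : Set.Icc (0:ℝ) 1)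
  · exact ciSup_le hbd

lemma log_taylor {y : ℝ} (hy : |y| ≤ 1/2) : |Real.log (1 - y) + y| ≤ 2 * y ^ 2 := by
  have h := Real.abs_log_sub_add_sum_range_le (by linarith [hy] : |y| < 1) 1
  simp only [Finset.sum_range_one, pow_one] at h
  norm_num at h
  have h2 : y ^ 2 / (1 - |y|) ≤ 2 * y ^ 2 := by
    rcases le_or_gt (1 - |y|) 0 with h3 | h3
    · linarith [abs_nonneg y]
    · rw [div_le_iff₀ h3]
      nlinarith [sq_nonneg y, abs_nonneg y]
  calc |Real.log (1 - y) + y| = |y + Real.log (1 - y)| := by rw [add_comm]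
    _ ≤ y ^ 2 / (1 - |y|) := h
    _ ≤ 2 * y ^ 2 := h2

set_option maxHeartbeats 2000000 in
/-- with p0 = 1 − e^{−Λ0τ}, p1(A) = 1 − e^{−(A+Λ0)τ} and the
corresponding β(A), β1(A), β2(A), the bound gap satisfies
Δ(A) = (3·L·(1−p0)/(16·p0))·τ²·A² + o(A²) as A → 0⁺. -/
theorem boundGap_lowPeakPower (τ Λ0 : ℝ) (L : ℕ)
    (hτ : 0 < τ) (hΛ0 : 0 < Λ0) (hL : 1 ≤ L)
    (p0 : ℝ) (hp0 : p0 = 1 - Real.exp (-(Λ0 * τ)))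
    (p1 : ℝ → ℝ) (hp1 : ∀ A, p1 A = 1 - Real.exp (-((A + Λ0) * τ))) :
    Filter.Tendsto
      (fun A : ℝ =>
        (boundGap ((Real.sqrt (p0 * p1 A) + Real.sqrt ((1 - p0) * (1 - p1 A))) ^ L)
              (((p0 / p1 A) ^ (p1 A) * ((1 - p0) / (1 - p1 A)) ^ (1 - p1 A)) ^ L)
              (((p1 A / p0) ^ p0 * ((1 - p1 A) / (1 - p0)) ^ (1 - p0)) ^ L) -
            3 * (L : ℝ) * (1 - p0) / (16 * p0) * τ ^ 2 * A ^ 2) /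
          A ^ 2)
      (nhdsWithin 0 (Set.Ioi 0)) (nhds 0) := by
  set q0 := Real.exp (-(Λ0 * τ)) with hq0def
  have hq0pos : 0 < q0 := Real.exp_pos _
  have hq0lt : q0 < 1 := by
    rw [hq0def]; exact Real.exp_lt_one_iff.mpr (by nlinarith)
  have hp0q : p0 = 1 - q0 := hp0
  have hp0pos : 0 < p0 := by rw [hp0q]; linarith
  have hq0p : 1 - p0 = q0 := by rw [hp0q]; ring
  have hpq : p0 + q0 = 1 := by rw [hp0q]; ring
  have h1p0ne : (1:ℝ) - p0 ≠ 0 := by rw [hq0p]; exact hq0pos.ne'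
  set δ : ℝ → ℝ := fun A => q0 * (1 - Real.exp (-(A * τ))) with hδdef
  have hqeA : ∀ A : ℝ, q0 * Real.exp (-(A * τ)) = Real.exp (-((A + Λ0) * τ)) := by
    intro A; rw [hq0def, ← Real.exp_add]; congr 1; ring
  have hp1δ : ∀ A, p1 A = p0 + δ A := by
    intro A
    rw [hp1 A, hp0q]
    simp only [hδdef]
    rw [← hqeA A]
    ring
  have h1p1δ : ∀ A, 1 - p1 A = q0 - δ A := by
    intro A; rw [hp1δ A, hp0q]; ring
  have hδ0 : δ 0 = 0 := by simp [hδdef]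
  have hδpos : ∀ A, 0 < A → 0 < δ A := by
    intro A hA
    simp only [hδdef]
    have : Real.exp (-(A * τ)) < 1 := Real.exp_lt_one_iff.mpr (by nlinarith)
    nlinarith
  have hp1pos : ∀ A, 0 < A → 0 < p1 A := by
    intro A hA; rw [hp1δ A]; linarith [hδpos A hA]
  have h1p1pos : ∀ A, 0 < 1 - p1 A := by
    intro A; rw [hp1 A]; simp [Real.exp_pos]
  have hδlt : ∀ A, 0 < q0 - δ A := by
    intro A; rw [← h1p1δ A]; exact h1p1pos A
  have hδcont : Continuous δ := by
    simp only [hδdef]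
    exact continuous_const.mul (continuous_const.sub
      (Real.continuous_exp.comp (continuous_id.mul continuous_const).neg))
  have hδto : Tendsto δ (nhdsWithin 0 (Ioi 0)) (nhdsWithin 0 (Ioi 0)) := by
    rw [tendsto_nhdsWithin_iff]
    constructor
    · have := (hδcont.tendsto 0).mono_left (nhdsWithin_le_nhds (s := Ioi (0:ℝ)))
      rwa [hδ0] at this
    · exact eventually_nhdsWithin_of_forall (fun A hA => hδpos A hA)
  have hδA : HasDerivAt δ (q0 * τ) 0 := by
    have hinner : HasDerivAt (fun A : ℝ => -(A * τ)) (-τ) 0 := by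
      exact (hasDerivAt_mul_const τ).neg
    have h := (hinner.exp.const_sub 1).const_mul q0
    convert h using 1
    · rfl
    · rfl
    simp
  have hslope : Tendsto (fun A => δ A / A) (nhdsWithin 0 (Ioi 0)) (nhds (q0 * τ)) := by
    have h := hasDerivAt_iff_tendsto_slope.mp hδA
    have h2 := h.mono_left (nhdsWithin_mono 0 (fun x hx => (ne_of_gt hx : x ≠ 0)))
    refine h2.congr' ?_
    filter_upwards [self_mem_nhdsWithin] with A hA
    rw [slope_def_field, hδ0]
    simp [div_eq_mul_inv, mul_comm]
  have H0' := (limRho p0 q0 L hp0pos hq0pos hpq).comp hδto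
  have H1' := (limKL1 p0 q0 L hp0pos hq0pos).comp hδto
  have H2' := (limKL2 p0 q0 L hp0pos hq0pos).comp hδto
  set B : ℝ → ℝ := fun A =>
    (Real.sqrt (p0 * p1 A) + Real.sqrt ((1 - p0) * (1 - p1 A))) ^ L with hBdef
  set B1 : ℝ → ℝ := fun A =>
    ((p0 / p1 A) ^ (p1 A) * ((1 - p0) / (1 - p1 A)) ^ (1 - p1 A)) ^ L with hB1def
  set B2 : ℝ → ℝ := fun A =>
    ((p1 A / p0) ^ p0 * ((1 - p1 A) / (1 - p0)) ^ (1 - p0)) ^ L with hB2def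
  show Tendsto (fun A : ℝ =>
      (boundGap (B A) (B1 A) (B2 A) - 3 * (L : ℝ) * (1 - p0) / (16 * p0) * τ ^ 2 * A ^ 2) / A ^ 2)
    (nhdsWithin 0 (Ioi 0)) (nhds 0)
  have hBeq : ∀ A, B A = (Real.sqrt (p0 * (p0 + δ A)) + Real.sqrt (q0 * (q0 - δ A))) ^ L := by
    intro A
    simp only [hBdef]
    rw [h1p1δ A, hq0p, hp1δ A]
  have hB1eq : ∀ A, 0 < A → B1 A = Real.exp (-(↑L *
      ((p0 + δ A) * Real.log ((p0 + δ A) / p0) + (q0 - δ A) * Real.log ((q0 - δ A) / q0)))) := by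
    intro A hA
    have h1' : 0 < p0 + δ A := by linarith [hδpos A hA]
    have h2' : 0 < q0 - δ A := hδlt A
    simp only [hB1def]
    rw [h1p1δ A, hq0p, hp1δ A]
    rw [Real.rpow_def_of_pos (div_pos hp0pos h1'), Real.rpow_def_of_pos (div_pos hq0pos h2'),
      ← Real.exp_add, ← Real.exp_nat_mul]
    congr 1
    rw [Real.log_div hp0pos.ne' h1'.ne', Real.log_div hq0pos.ne' h2'.ne',
      Real.log_div h1'.ne' hp0pos.ne', Real.log_div h2'.ne' hq0pos.ne']
    ring
  have hB2eq : ∀ A, 0 < A → B2 A = Real.exp (↑L *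
      (p0 * Real.log ((p0 + δ A) / p0) + q0 * Real.log ((q0 - δ A) / q0))) := by
    intro A hA
    have h1' : 0 < p0 + δ A := by linarith [hδpos A hA]
    have h2' : 0 < q0 - δ A := hδlt A
    simp only [hB2def]
    rw [h1p1δ A, hq0p, hp1δ A]
    rw [Real.rpow_def_of_pos (div_pos h1' hp0pos), Real.rpow_def_of_pos (div_pos h2' hq0pos),
      ← Real.exp_add, ← Real.exp_nat_mul]
    congr 1
    ring
  set W0 : ℝ → ℝ := fun A => (1 - B A) / A ^ 2 with hW0def
  set W1 : ℝ → ℝ := fun A => (1 - B1 A) / A ^ 2 with hW1def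
  set W2 : ℝ → ℝ := fun A => (1 - B2 A) / A ^ 2 with hW2def
  set k0 : ℝ := ↑L * (1 / (4 * p0) + 1 / (4 * q0)) / 2 * (q0 * τ) ^ 2 with hk0def
  set k1 : ℝ := ↑L * (1 / p0 + 1 / q0) / 2 * (q0 * τ) ^ 2 with hk1def
  have HW0 : Tendsto W0 (nhdsWithin 0 (Ioi 0)) (nhds k0) := by
    have h := H0'.mul (hslope.pow 2)
    refine h.congr' ?_
    filter_upwards [self_mem_nhdsWithin] with A hA
    have hAne : (A:ℝ) ≠ 0 := ne_of_gt hA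
    have hδne : δ A ≠ 0 := (hδpos A hA).ne'
    simp only [Function.comp_apply, hW0def]
    rw [hBeq A]
    field_simp
  have HW1 : Tendsto W1 (nhdsWithin 0 (Ioi 0)) (nhds k1) := by
    have h := H1'.mul (hslope.pow 2)
    refine h.congr' ?_
    filter_upwards [self_mem_nhdsWithin] with A hA
    have hAne : (A:ℝ) ≠ 0 := ne_of_gt hA
    have hδne : δ A ≠ 0 := (hδpos A hA).ne'
    simp only [Function.comp_apply, hW1def]
    rw [hB1eq A hA]
    field_simp
  have HW2 : Tendsto W2 (nhdsWithin 0 (Ioi 0)) (nhds k1) := by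
    have h := H2'.mul (hslope.pow 2)
    refine h.congr' ?_
    filter_upwards [self_mem_nhdsWithin] with A hA
    have hAne : (A:ℝ) ≠ 0 := ne_of_gt hA
    have hδne : δ A ≠ 0 := (hδpos A hA).ne'
    simp only [Function.comp_apply, hW2def]
    rw [hB2eq A hA]
    field_simp
  have hAsq : Tendsto (fun A : ℝ => A ^ 2) (nhdsWithin 0 (Ioi 0)) (nhds 0) := by
    have := ((continuous_pow 2).tendsto (0:ℝ)).mono_left
      (nhdsWithin_le_nhds (s := Ioi (0:ℝ)))
    simpa using this
  have hone : ∀ (W : ℝ → ℝ) (G : ℝ → ℝ) (k : ℝ), Tendsto W (nhdsWithin 0 (Ioi 0)) (nhds k) →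
      (∀ A : ℝ, W A = (1 - G A) / A ^ 2) →
      Tendsto (fun A => 1 - G A) (nhdsWithin 0 (Ioi 0)) (nhds 0) := by
    intro W G k hW hWG
    have h := hW.mul hAsq
    rw [mul_zero] at h
    refine h.congr' ?_
    filter_upwards [self_mem_nhdsWithin] with A hA
    have hAne : (A:ℝ) ≠ 0 := ne_of_gt hA
    rw [hWG A]
    field_simp
  have hx0 : Tendsto (fun A => 1 - B A) (nhdsWithin 0 (Ioi 0)) (nhds 0) :=
    hone W0 B k0 HW0 (fun A => rfl)
  have hx1 : Tendsto (fun A => 1 - B1 A) (nhdsWithin 0 (Ioi 0)) (nhds 0) :=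
    hone W1 B1 k1 HW1 (fun A => rfl)
  have hx2 : Tendsto (fun A => 1 - B2 A) (nhdsWithin 0 (Ioi 0)) (nhds 0) :=
    hone W2 B2 k1 HW2 (fun A => rfl)
  have hB1lim : Tendsto B1 (nhdsWithin 0 (Ioi 0)) (nhds 1) := by
    have := tendsto_const_nhds (α := ℝ) (x := (1:ℝ)) (f := nhdsWithin (0:ℝ) (Ioi 0)) |>.sub hx1
    simpa using this
  have hB2lim : Tendsto B2 (nhdsWithin 0 (Ioi 0)) (nhds 1) := by
    have := tendsto_const_nhds (α := ℝ) (x := (1:ℝ)) (f := nhdsWithin (0:ℝ) (Ioi 0)) |>.sub hx2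
    simpa using this
  -- positivity of B, B1, B2 for A > 0
  have hBpos : ∀ A, 0 < A → 0 < B A := by
    intro A hA
    simp only [hBdef]
    apply pow_pos
    have h1 : 0 < Real.sqrt (p0 * p1 A) :=
      Real.sqrt_pos.mpr (mul_pos hp0pos (hp1pos A hA))
    have h2 : 0 ≤ Real.sqrt ((1 - p0) * (1 - p1 A)) := Real.sqrt_nonneg _
    linarith
  have hB1pos : ∀ A, 0 < A → 0 < B1 A := by
    intro A hA; rw [hB1eq A hA]; exact Real.exp_pos _
  have hB2pos : ∀ A, 0 < A → 0 < B2 A := by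
    intro A hA; rw [hB2eq A hA]; exact Real.exp_pos _
  set Lo : ℝ → ℝ := fun A => Fu (1/2) (B1 A) (B2 A) - Fl (1/2) (B A) with hLodef
  set Up : ℝ → ℝ := fun A =>
    (max (B A - B1 A) 0 / min (B1 A) 1 + max (B A - B2 A) 0 / min (B2 A) 1) / 4 with hUpdef
  have hlow : ∀ᶠ A in nhdsWithin (0:ℝ) (Ioi 0), Lo A ≤ boundGap (B A) (B1 A) (B2 A) := by
    filter_upwards [self_mem_nhdsWithin] with A hA
    exact (boundGap_bounds (hBpos A hA) (hB1pos A hA) (hB2pos A hA)).1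
  have hup : ∀ᶠ A in nhdsWithin (0:ℝ) (Ioi 0), boundGap (B A) (B1 A) (B2 A) ≤ Up A := by
    filter_upwards [self_mem_nhdsWithin] with A hA
    exact (boundGap_bounds (hBpos A hA) (hB1pos A hA) (hB2pos A hA)).2
  have hk : k1 - k0 = 3 * ↑L * q0 * τ ^ 2 / (8 * p0) := by
    simp only [hk0def, hk1def]
    rw [← hq0p]
    field_simp
    ring
  have hknn : 0 ≤ k1 - k0 := by
    rw [hk]; positivity
  -- limit of Up / A²
  have HUp : Tendsto (fun A => Up A / A ^ 2) (nhdsWithin 0 (Ioi 0))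
      (nhds (3 * (L : ℝ) * (1 - p0) / (16 * p0) * τ ^ 2)) := by
    have HUpQ : Tendsto (fun A =>
        (max (W1 A - W0 A) 0 / min (B1 A) 1 + max (W2 A - W0 A) 0 / min (B2 A) 1) / 4)
        (nhdsWithin 0 (Ioi 0))
        (nhds ((max (k1 - k0) 0 / min 1 1 + max (k1 - k0) 0 / min 1 1) / 4)) :=
      ((((HW1.sub HW0).max tendsto_const_nhds).div
          (hB1lim.min tendsto_const_nhds) (by norm_num)).add
        (((HW2.sub HW0).max tendsto_const_nhds).div
          (hB2lim.min tendsto_const_nhds) (by norm_num))).div_const 4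
    have hval : (max (k1 - k0) 0 / min 1 1 + max (k1 - k0) 0 / min 1 1) / 4 =
        3 * (L : ℝ) * (1 - p0) / (16 * p0) * τ ^ 2 := by
      rw [min_self, max_eq_left hknn, hk, hq0p]
      ring
    rw [hval] at HUpQ
    refine HUpQ.congr' ?_
    filter_upwards [self_mem_nhdsWithin] with A hA
    have hA2 : (0:ℝ) < A ^ 2 := pow_pos hA 2
    have e1 : (B A - B1 A) / A ^ 2 = W1 A - W0 A := by
      simp only [hW0def, hW1def]
      rw [div_sub_div_same]
      congr 1
      ring
    have e2 : (B A - B2 A) / A ^ 2 = W2 A - W0 A := by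
      simp only [hW0def, hW2def]
      rw [div_sub_div_same]
      congr 1
      ring
    have hring : Up A / A ^ 2 =
        (max (B A - B1 A) 0 / A ^ 2 / min (B1 A) 1 +
         max (B A - B2 A) 0 / A ^ 2 / min (B2 A) 1) / 4 := by
      simp only [hUpdef]
      ring
    rw [hring, ← max_div_div_right hA2.le, ← max_div_div_right hA2.le, zero_div, e1, e2]
  -- limit of Lo / A²
  set R : ℝ → ℝ := fun A =>
    Lo A - (-(1 - B A) / 2 + (1 - B1 A) / 4 + (1 - B2 A) / 4) with hRdef
  have hLoform : ∀ A, Lo A = Real.log (1 - (1 - B A) / 2)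
      - Real.log (1 - (1 - B1 A) / 2) / 2 - Real.log (1 - (1 - B2 A) / 2) / 2 := by
    intro A
    have harg1 : ∀ x : ℝ, (1 - 1/2 : ℝ) * x + 1/2 = 1 - (1 - x) / 2 := fun x => by ring
    have harg2 : ∀ x : ℝ, (1/2 : ℝ) * x + (1 - 1/2) = 1 - (1 - x) / 2 := fun x => by ring
    simp only [hLodef, Fu, Fl, harg1, harg2]
    ring
  have esmall : ∀ (G : ℝ → ℝ), Tendsto (fun A => 1 - G A) (nhdsWithin 0 (Ioi 0)) (nhds 0) →
      ∀ᶠ A in nhdsWithin (0:ℝ) (Ioi 0), |1 - G A| ≤ 1/2 := by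
    intro G hG
    have := Metric.tendsto_nhds.mp hG (1/2) (by norm_num)
    filter_upwards [this] with A hA
    rw [Real.dist_eq, sub_zero] at hA
    linarith
  have hRb : ∀ᶠ A in nhdsWithin (0:ℝ) (Ioi 0),
      |R A| ≤ (1 - B A) ^ 2 + (1 - B1 A) ^ 2 + (1 - B2 A) ^ 2 := by
    filter_upwards [esmall B hx0, esmall B1 hx1, esmall B2 hx2] with A h0 h1 h2
    have habs : ∀ x : ℝ, |x| ≤ 1/2 → |(x : ℝ)/2| ≤ 1/2 := by
      intro x hx
      rw [abs_div, abs_two]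
      linarith
    have t0 := log_taylor (habs _ h0)
    have t1 := log_taylor (habs _ h1)
    have t2 := log_taylor (habs _ h2)
    have hR : R A = (Real.log (1 - (1 - B A)/2) + (1 - B A)/2)
        - (Real.log (1 - (1 - B1 A)/2) + (1 - B1 A)/2) / 2
        - (Real.log (1 - (1 - B2 A)/2) + (1 - B2 A)/2) / 2 := by
      simp only [hRdef]
      rw [hLoform A]
      ring
    set a := Real.log (1 - (1 - B A)/2) + (1 - B A)/2
    set b := Real.log (1 - (1 - B1 A)/2) + (1 - B1 A)/2
    set c := Real.log (1 - (1 - B2 A)/2) + (1 - B2 A)/2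
    have step : |R A| ≤ |a| + |b|/2 + |c|/2 := by
      rw [hR]
      calc |a - b/2 - c/2| ≤ |a - b/2| + |c/2| := abs_sub _ _
        _ ≤ |a| + |b/2| + |c/2| := by linarith [abs_sub a (b/2)]
        _ = |a| + |b|/2 + |c|/2 := by rw [abs_div, abs_div, abs_two]
    have q0' : 2 * ((1 - B A)/2) ^ 2 = (1 - B A)^2 / 2 := by ring
    have q1' : 2 * ((1 - B1 A)/2) ^ 2 = (1 - B1 A)^2 / 2 := by ring
    have q2' : 2 * ((1 - B2 A)/2) ^ 2 = (1 - B2 A)^2 / 2 := by ring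
    rw [q0'] at t0; rw [q1'] at t1; rw [q2'] at t2
    linarith [step, t0, t1, t2, sq_nonneg (1 - B A), sq_nonneg (1 - B1 A), sq_nonneg (1 - B2 A)]
  have hg : Tendsto (fun A => W0 A * (1 - B A) + W1 A * (1 - B1 A) + W2 A * (1 - B2 A))
      (nhdsWithin 0 (Ioi 0)) (nhds 0) := by
    have := ((HW0.mul hx0).add (HW1.mul hx1)).add (HW2.mul hx2)
    simpa using this
  have hRdiv : Tendsto (fun A => R A / A ^ 2) (nhdsWithin 0 (Ioi 0)) (nhds 0) := by
    apply squeeze_zero_norm' _ hg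
    filter_upwards [hRb, self_mem_nhdsWithin] with A hb hA
    have hA2 : (0:ℝ) < A ^ 2 := pow_pos hA 2
    rw [Real.norm_eq_abs, abs_div, abs_of_pos hA2]
    calc |R A| / A ^ 2 ≤ ((1 - B A)^2 + (1 - B1 A)^2 + (1 - B2 A)^2) / A ^ 2 :=
          div_le_div_of_nonneg_right hb hA2.le
      _ = W0 A * (1 - B A) + W1 A * (1 - B1 A) + W2 A * (1 - B2 A) := by
          simp only [hW0def, hW1def, hW2def]
          ring
  have HLo : Tendsto (fun A => Lo A / A ^ 2) (nhdsWithin 0 (Ioi 0))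
      (nhds (3 * (L : ℝ) * (1 - p0) / (16 * p0) * τ ^ 2)) := by
    have h := ((((HW0.neg).div_const 2).add (HW1.div_const 4)).add (HW2.div_const 4)).add hRdiv
    have hval : (-k0 / 2 + k1 / 4 + k1 / 4) + 0 = 3 * (L : ℝ) * (1 - p0) / (16 * p0) * τ ^ 2 := by
      rw [add_zero]
      simp only [hk0def, hk1def]
      rw [← hq0p]
      field_simp
      ring
    rw [hval] at h
    refine h.congr' ?_
    filter_upwards [] with A
    simp only [hRdef, hW0def, hW1def, hW2def]
    ring
  -- final squeeze
  have hlowq : Tendsto (fun A => Lo A / A ^ 2 - 3 * (L : ℝ) * (1 - p0) / (16 * p0) * τ ^ 2)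
      (nhdsWithin 0 (Ioi 0)) (nhds 0) := by
    have := HLo.sub_const (3 * (L : ℝ) * (1 - p0) / (16 * p0) * τ ^ 2)
    simpa using this
  have hupq : Tendsto (fun A => Up A / A ^ 2 - 3 * (L : ℝ) * (1 - p0) / (16 * p0) * τ ^ 2)
      (nhdsWithin 0 (Ioi 0)) (nhds 0) := by
    have := HUp.sub_const (3 * (L : ℝ) * (1 - p0) / (16 * p0) * τ ^ 2)
    simpa using this
  apply tendsto_of_tendsto_of_tendsto_of_le_of_le' hlowq hupq
  · filter_upwards [hlow, self_mem_nhdsWithin] with A hl hA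
    have hA2 : (0:ℝ) < A ^ 2 := pow_pos hA 2
    have he : (boundGap (B A) (B1 A) (B2 A) - 3 * (L : ℝ) * (1 - p0) / (16 * p0) * τ ^ 2 * A ^ 2)
        / A ^ 2 = boundGap (B A) (B1 A) (B2 A) / A ^ 2
          - 3 * (L : ℝ) * (1 - p0) / (16 * p0) * τ ^ 2 := by
      field_simp [(mem_Ioi.mp hA).ne']
    rw [he]
    have := div_le_div_of_nonneg_right hl hA2.le
    linarith
  · filter_upwards [hup, self_mem_nhdsWithin] with A hu hA
    have hA2 : (0:ℝ) < A ^ 2 := pow_pos hA 2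
    have he : (boundGap (B A) (B1 A) (B2 A) - 3 * (L : ℝ) * (1 - p0) / (16 * p0) * τ ^ 2 * A ^ 2)
        / A ^ 2 = boundGap (B A) (B1 A) (B2 A) / A ^ 2
          - 3 * (L : ℝ) * (1 - p0) / (16 * p0) * τ ^ 2 := by
      field_simp [(mem_Ioi.mp hA).ne']
    rw [he]
    have := div_le_div_of_nonneg_right hu hA2.le
    linarith
end
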